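/- Let y, z ∈ ℝᵐ be linearly independent and let x ∈ ℝᵐ. Then ‖x − P_K(x)‖² = ‖(x − P_y x) − P_z(x − P_y x)‖² − ⟨x − P_y x, P_z y⟩² / ‖y − P_z y‖², where K = span{y, z}, P_K is the orthogonal projection onto K, and P_v(w) = (⟨v,w⟩/‖v‖²)·v for v ≠ 0 is the orthogonal projection onto the line spanned by v. -/

import Mathlib

open scoped RealInnerProductSpace BigOperators

/-- Orthogonal projection onto the line spanned by `v` (for `v ≠ 0`). -/
noncomputable def lineProj {m : ℕ} (v w : EuclideanSpace ℝ (Fin m)) :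
    EuclideanSpace ℝ (Fin m) :=
  (⟪v, w⟫ / ‖v‖ ^ 2) • v

set_option maxHeartbeats 1000000 in
/-- Lemma 4.5 of Lorenz et al.: for linearly independent `y, z` and any `x`,
`‖x − P_K x‖² = ‖(I − P_z)(I − P_y)x‖² − ⟨(I − P_y)x, P_z y⟩²/‖(I − P_z)y‖²`,
where `K = span{y, z}`. -/
theorem proj_span_two_formula {m : ℕ} (y z x : EuclideanSpace ℝ (Fin m))
    (hind : LinearIndependent ℝ ![y, z]) :
    ‖x - (Submodule.orthogonalProjection (Submodule.span ℝ {y, z}) x :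
        EuclideanSpace ℝ (Fin m))‖ ^ 2 =
      ‖(x - lineProj y x) - lineProj z (x - lineProj y x)‖ ^ 2 -
        ⟪x - lineProj y x, lineProj z y⟫ ^ 2 / ‖y - lineProj z y‖ ^ 2 := by
  obtain ⟨hz, hyz⟩ := linearIndependent_fin2.mp hind
  simp only [Matrix.cons_val_one, Matrix.head_cons, Matrix.cons_val_zero] at hz hyz
  have hy : y ≠ 0 := by simpa using hind.ne_zero 0
  have hY : ‖y‖ ^ 2 ≠ 0 := pow_ne_zero 2 (norm_ne_zero_iff.mpr hy)
  have hZ : ‖z‖ ^ 2 ≠ 0 := pow_ne_zero 2 (norm_ne_zero_iff.mpr hz)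
  set b2 : EuclideanSpace ℝ (Fin m) := y - lineProj z y with hb2def
  have hb2 : b2 ≠ 0 := by
    intro h
    exact hyz (⟪z, y⟫ / ‖z‖ ^ 2) (sub_eq_zero.mp h).symm
  have hW : ‖b2‖ ^ 2 ≠ 0 := pow_ne_zero 2 (norm_ne_zero_iff.mpr hb2)
  have hzb2 : ⟪z, b2⟫ = 0 := by
    simp only [hb2def, lineProj, inner_sub_right, real_inner_smul_right]
    rw [real_inner_self_eq_norm_sq]
    field_simp
    ring
  have hb2z : ⟪b2, z⟫ = 0 := by rw [real_inner_comm]; exact hzb2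
  -- value of ‖b2‖^2 in scalars
  have hbb : ‖b2‖ ^ 2 = ‖y‖ ^ 2 - ⟪z, y⟫ ^ 2 / ‖z‖ ^ 2 := by
    rw [← real_inner_self_eq_norm_sq]
    simp only [hb2def, lineProj, inner_sub_left, inner_sub_right,
      real_inner_smul_left, real_inner_smul_right, real_inner_comm y z]
    rw [real_inner_self_eq_norm_sq, real_inner_self_eq_norm_sq]
    field_simp
    ring
  have hb2x : ⟪b2, x⟫ = ⟪y, x⟫ - ⟪z, y⟫ * ⟪z, x⟫ / ‖z‖ ^ 2 := by
    simp only [hb2def, lineProj, inner_sub_left, real_inner_smul_left]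
    ring
  set p : EuclideanSpace ℝ (Fin m) :=
    (⟪z, x⟫ / ‖z‖ ^ 2) • z + (⟪b2, x⟫ / ‖b2‖ ^ 2) • b2 with hpdef
  have hmemy : y ∈ Submodule.span ℝ ({y, z} : Set (EuclideanSpace ℝ (Fin m))) :=
    Submodule.subset_span (Set.mem_insert _ _)
  have hmemz : z ∈ Submodule.span ℝ ({y, z} : Set (EuclideanSpace ℝ (Fin m))) :=
    Submodule.subset_span (Set.mem_insert_of_mem _ rfl)
  have hmemb2 : b2 ∈ Submodule.span ℝ ({y, z} : Set (EuclideanSpace ℝ (Fin m))) := by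
    exact Submodule.sub_mem _ hmemy (Submodule.smul_mem _ _ hmemz)
  have hpmem : p ∈ Submodule.span ℝ ({y, z} : Set (EuclideanSpace ℝ (Fin m))) :=
    Submodule.add_mem _ (Submodule.smul_mem _ _ hmemz) (Submodule.smul_mem _ _ hmemb2)
  have h1 : ⟪x - p, z⟫ = 0 := by
    simp only [hpdef, inner_sub_left, inner_add_left, real_inner_smul_left, hb2z, mul_zero]
    rw [real_inner_self_eq_norm_sq, real_inner_comm z x]
    field_simp
    ring
  have h2 : ⟪x - p, b2⟫ = 0 := by
    simp only [hpdef, inner_sub_left, inner_add_left, real_inner_smul_left, hzb2, mul_zero]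
    rw [real_inner_self_eq_norm_sq, real_inner_comm b2 x]
    field_simp
    ring
  have h3 : ⟪x - p, y⟫ = 0 := by
    have hyrw : y = b2 + (⟪z, y⟫ / ‖z‖ ^ 2) • z := by
      simp [hb2def, lineProj]
    rw [hyrw, inner_add_right, real_inner_smul_right, h1, h2]
    ring
  have hproj : (Submodule.orthogonalProjection (Submodule.span ℝ {y, z}) x :
      EuclideanSpace ℝ (Fin m)) = p := by
    apply Submodule.eq_starProjection_of_mem_of_inner_eq_zero hpmem
    intro w hw
    obtain ⟨a, b, rfl⟩ := Submodule.mem_span_pair.mp hw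
    rw [inner_add_right, real_inner_smul_right, real_inner_smul_right, h1, h3]
    ring
  rw [hproj]
  -- LHS in scalars
  have hLHS : ‖x - p‖ ^ 2 =
      ‖x‖ ^ 2 - ⟪z, x⟫ ^ 2 / ‖z‖ ^ 2 - ⟪b2, x⟫ ^ 2 / ‖b2‖ ^ 2 := by
    rw [← real_inner_self_eq_norm_sq]
    have hkey : ⟪x - p, x - p⟫ = ⟪x - p, x⟫ - ⟪x - p, p⟫ := inner_sub_right _ _ _
    have hxp : ⟪x - p, p⟫ = 0 := by
      rw [hpdef, inner_add_right, real_inner_smul_right, real_inner_smul_right, h1, h2]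
      ring
    rw [hkey, hxp, sub_zero, inner_sub_left, hpdef, inner_add_left,
      real_inner_smul_left, real_inner_smul_left, real_inner_self_eq_norm_sq]
    field_simp
    ring
  rw [hLHS, hb2x, hbb]
  -- RHS norms in scalars
  have hRn : ‖(x - lineProj y x) - lineProj z (x - lineProj y x)‖ ^ 2 =
      ‖x‖ ^ 2 - ⟪y, x⟫ ^ 2 / ‖y‖ ^ 2 -
        (⟪z, x⟫ - ⟪z, y⟫ * ⟪y, x⟫ / ‖y‖ ^ 2) ^ 2 / ‖z‖ ^ 2 := by
    rw [← real_inner_self_eq_norm_sq]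
    simp only [lineProj, inner_sub_left, inner_sub_right, real_inner_smul_left,
      real_inner_smul_right, real_inner_comm y x, real_inner_comm z x, real_inner_comm y z]
    rw [real_inner_self_eq_norm_sq, real_inner_self_eq_norm_sq, real_inner_self_eq_norm_sq]
    field_simp
    ring
  have hRi : ⟪x - lineProj y x, lineProj z y⟫ =
      ⟪z, y⟫ / ‖z‖ ^ 2 * (⟪z, x⟫ - ⟪z, y⟫ * ⟪y, x⟫ / ‖y‖ ^ 2) := by
    simp only [lineProj, inner_sub_left, real_inner_smul_left, real_inner_smul_right,
      real_inner_comm y x, real_inner_comm z x, real_inner_comm y z]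
    field_simp
  rw [hRn, hRi]
  have hbbZ : ‖b2‖ ^ 2 * ‖z‖ ^ 2 = ‖y‖ ^ 2 * ‖z‖ ^ 2 - ⟪z, y⟫ ^ 2 := by
    rw [hbb, sub_mul, div_mul_cancel₀ _ hZ]
  have hD : ‖y‖ ^ 2 * ‖z‖ ^ 2 - ⟪z, y⟫ ^ 2 ≠ 0 := by
    rw [← hbbZ]; exact mul_ne_zero hW hZ
  set A := ⟪y, x⟫ with hA
  set B := ⟪z, x⟫ with hB
  set C := ⟪z, y⟫ with hC
  set X := ‖x‖ ^ 2 with hX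
  set Y := ‖y‖ ^ 2 with hYd
  set Z := ‖z‖ ^ 2 with hZd
  have hsub : Y - C ^ 2 / Z = (Y * Z - C ^ 2) / Z := by
    field_simp
  rw [hsub, div_div_eq_mul_div, div_div_eq_mul_div]
  field_simp
  linear_combination (2*Y*B*A*C - A^2*Y*Z - A^2*C^2) * mul_inv_cancel₀ hD
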